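/- (Theorem 3.1, linear convergence) Let P : ℝ^{n1×n2×n3} → ℝ^{n1×n2×n3} be an orthogonal projection with respect to the Frobenius inner product, let Y ∈ ℝ^{n1×n2×n3}, and let (R_k)_{k≥1} be a sequence of tensors such that: R_1 = P(Y); P(R_k) = R_k for all k ≥ 1; and for each k ≥ 1, either R_k = 0 and R_{k+1} = 0, or R_k ≠ 0 and ‖R_{k+1}‖_F ≤ inf_{θ∈ℝ} ‖R_k − θ·P(M_k)‖_F, where M_k is the normalized leading rank-one tensor of some ordered t-SVD of R_k. Then for all k ≥ 1, ‖R_k‖_F ≤ (√(1 − 1/min(n1,n2)))^{k−1} · ‖P(Y)‖_F. -/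

import Mathlib

open scoped BigOperators Matrix Kronecker ComplexConjugate
open Complex

/-- A third-order tensor of size `n1 × n2 × n3` with entries in `R`. -/
abbrev T3 (n1 n2 n3 : ℕ) (R : Type*) : Type _ := Fin n1 → Fin n2 → Fin n3 → R

namespace T3

variable {n1 n2 n3 l : ℕ}

/-- The Frobenius inner product `⟨A,B⟩ = Σ_{i,j,k} A_{ijk} B_{ijk}`. -/
def tInner (A B : T3 n1 n2 n3 ℝ) : ℝ := ∑ i, ∑ j, ∑ k, A i j k * B i j k

/-- The Frobenius norm `‖A‖_F = √⟨A,A⟩`. -/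
noncomputable def tNorm (A : T3 n1 n2 n3 ℝ) : ℝ := Real.sqrt (tInner A A)

/-- The `n × n` DFT matrix, `(F_n)_{ab} = ω^{ab}` (0-based), `ω = exp(-2πi/n)`. -/
noncomputable def dftMatrix (n : ℕ) : Matrix (Fin n) (Fin n) ℂ :=
  fun a b => Complex.exp (-(2 * (Real.pi : ℂ) * Complex.I) / (n : ℂ)) ^ ((a : ℕ) * (b : ℕ))

/-- The `k`-th frontal slice `Â^{(k)}` of the DFT of `A` along the third dimension:
`Â(i,j,:) = F_{n3} · A(i,j,:)`. -/
noncomputable def hatSlice (A : T3 n1 n2 n3 ℝ) (k : Fin n3) : Matrix (Fin n1) (Fin n2) ℂ :=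
  fun i j => ∑ m : Fin n3, dftMatrix n3 k m * (A i j m : ℂ)

/-- The block circulant matrix of `A`: the `(p,q)` block (0-based) is the frontal
slice `A^{(p-q mod n3)}`. -/
def bcirc (A : T3 n1 n2 n3 ℝ) : Matrix (Fin n3 × Fin n1) (Fin n3 × Fin n2) ℝ :=
  fun p q => A p.2 q.2 (p.1 - q.1)

/-- The block diagonal matrix with diagonal blocks `Â^{(1)}, …, Â^{(n3)}`. -/
noncomputable def bdiag (A : T3 n1 n2 n3 ℝ) : Matrix (Fin n3 × Fin n1) (Fin n3 × Fin n2) ℂ :=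
  fun p q => if p.1 = q.1 then hatSlice A p.1 p.2 q.2 else 0

/-- t-product: `(A*B)^{(k)} = Σ_q A^{(k-q mod n3)} B^{(q)}` (circular convolution of slices). -/
def tprod (A : T3 n1 n2 n3 ℝ) (B : T3 n2 l n3 ℝ) : T3 n1 l n3 ℝ :=
  fun i j k => ∑ q : Fin n3, ∑ p : Fin n2, A i p (k - q) * B p j q

/-- Tensor transpose: `(Aᵀ)^{(k)} = (A^{(-k mod n3)})ᵀ`. -/
def tT (A : T3 n1 n2 n3 ℝ) : T3 n2 n1 n3 ℝ := fun j i k => A i j (-k)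

/-- The identity tensor: first frontal slice the identity matrix, other slices zero. -/
def tI (q m : ℕ) : T3 q q m ℝ := fun i j k => if i = j ∧ (k : ℕ) = 0 then 1 else 0

/-- An orthogonal tensor: `Qᵀ * Q = Q * Qᵀ = I`. -/
def TOrth {n m : ℕ} (Q : T3 n n m ℝ) : Prop :=
  tprod (tT Q) Q = tI n m ∧ tprod Q (tT Q) = tI n m

/-- A partially orthogonal tensor: `Qᵀ * Q = I`. -/
def PartOrth {n q m : ℕ} (Q : T3 n q m ℝ) : Prop := tprod (tT Q) Q = tI q m

/-- f-diagonal tensor: every frontal slice is a diagonal matrix. -/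
def FDiag (S : T3 n1 n2 n3 ℝ) : Prop :=
  ∀ (i : Fin n1) (j : Fin n2) (k : Fin n3), (i : ℕ) ≠ (j : ℕ) → S i j k = 0

/-- Every Fourier-domain frontal slice of `S` has real, nonnegative, nonincreasing
diagonal entries. -/
def OrderedDiag (S : T3 n1 n2 n3 ℝ) : Prop :=
  ∀ k : Fin n3,
    (∀ (i : Fin n1) (j : Fin n2), (i : ℕ) = (j : ℕ) →
      (hatSlice S k i j).im = 0 ∧ 0 ≤ (hatSlice S k i j).re) ∧
    (∀ (i i' : Fin n1) (j j' : Fin n2), (i : ℕ) = (j : ℕ) → (i' : ℕ) = (j' : ℕ) →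
      (i : ℕ) ≤ (i' : ℕ) → (hatSlice S k i' j').re ≤ (hatSlice S k i j).re)

/-- A t-SVD of `A`: `A = U * S * Vᵀ` with `U, V` orthogonal and `S` f-diagonal. -/
def IsTSVD (A : T3 n1 n2 n3 ℝ) (U : T3 n1 n1 n3 ℝ) (S : T3 n1 n2 n3 ℝ)
    (V : T3 n2 n2 n3 ℝ) : Prop :=
  TOrth U ∧ TOrth V ∧ FDiag S ∧ A = tprod (tprod U S) (tT V)

/-- An ordered t-SVD. -/
def IsOrderedTSVD (A : T3 n1 n2 n3 ℝ) (U : T3 n1 n1 n3 ℝ) (S : T3 n1 n2 n3 ℝ)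
    (V : T3 n2 n2 n3 ℝ) : Prop :=
  IsTSVD A U S V ∧ OrderedDiag S

/-- Lateral slice `U(:,i,:)` as an `n1 × 1 × n3` tensor. -/
def lat (U : T3 n1 n2 n3 ℝ) (i : Fin n2) : T3 n1 1 n3 ℝ := fun a _ k => U a i k

/-- Tube `S(i,j,:)` as a `1 × 1 × n3` tensor. -/
def tube (S : T3 n1 n2 n3 ℝ) (i : Fin n1) (j : Fin n2) : T3 1 1 n3 ℝ := fun _ _ k => S i j k

/-- The rank-one term `U(:,i,:) * S(i,j,:) * V(:,j,:)ᵀ`. -/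
def rankOne (U : T3 n1 n1 n3 ℝ) (S : T3 n1 n2 n3 ℝ) (V : T3 n2 n2 n3 ℝ)
    (i : Fin n1) (j : Fin n2) : T3 n1 n2 n3 ℝ :=
  tprod (tprod (lat U i) (tube S i j)) (tT (lat V j))

/-- The normalized leading rank-one tensor
`M₁ = U(:,1,:) * (S(1,1,:)/‖S(1,1,:)‖_F) * V(:,1,:)ᵀ`. -/
noncomputable def leadM (hn1 : 0 < n1) (hn2 : 0 < n2) (U : T3 n1 n1 n3 ℝ)
    (S : T3 n1 n2 n3 ℝ) (V : T3 n2 n2 n3 ℝ) : T3 n1 n2 n3 ℝ :=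
  tprod (tprod (lat U ⟨0, hn1⟩)
      (fun _ _ k => S ⟨0, hn1⟩ ⟨0, hn2⟩ k / tNorm (tube S ⟨0, hn1⟩ ⟨0, hn2⟩)))
    (tT (lat V ⟨0, hn2⟩))

/-- `‖Y‖_{1,F}`: the maximal Euclidean norm of a column fiber of a frontal slice of `Ŷ`. -/
noncomputable def norm1F (Y : T3 n1 n2 n3 ℝ) : ℝ :=
  ⨆ p : Fin n2 × Fin n3, Real.sqrt (∑ i, ‖hatSlice Y p.2 i p.1‖ ^ 2)

/-- The tubal rank: the maximal rank of a frontal slice of the third-mode DFT. -/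
noncomputable def tubalRank (X : T3 n1 n2 n3 ℝ) : ℕ :=
  Finset.univ.sup fun k : Fin n3 => (hatSlice X k).rank

end T3

open T3

/-!
In the Fourier domain the t-product becomes slicewise matrix multiplication, the tensor transpose
becomes conjugate transposition, and Parseval reads `n₃ ⟨A, B⟩ = ∑ₖ tr (Âₖ B̂ₖᴴ)`. Hence, for an
ordered t-SVD `R = U * S * Vᵀ` with leading tensor `M` and `ν = ‖S(1,1,:)‖_F`, the unitary
factors drop out and one gets `⟨R, M⟩ = ν`, `‖M‖_F = 1`, and, since each `Ŝₖ` has at most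
`min(n1,n2)` nonzero entries, all of modulus at most `|Ŝₖ(1,1)|`, also `‖R‖²_F ≤ min(n1,n2) ν²`.
As `P` is an orthogonal projection fixing `R`, `⟨R, P M⟩ = ν` and `‖P M‖_F ≤ 1`, so `θ = ν`
gives `‖R - ν P M‖² ≤ ‖R‖² - ν² ≤ (1 - 1/min(n1,n2)) ‖R‖²`. Iterating gives the geometric decay.
-/

open RealInnerProductSpace in
lemma norm_sub_inner_smul_le {E : Type*} [NormedAddCommGroup E] [InnerProductSpace ℝ E]
    {r q : E} {c : ℝ} (hc : 0 < c) (hq : ‖q‖ ≤ 1) (hr : ‖r‖ ^ 2 ≤ c * ⟪r, q⟫ ^ 2) :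
    ‖r - ⟪r, q⟫ • q‖ ≤ √(1 - 1 / c) * ‖r‖ := by
  have hsq : ‖r - ⟪r, q⟫ • q‖ ^ 2 ≤ (1 - 1 / c) * ‖r‖ ^ 2 := by
    have hq2 : ⟪r, q⟫ ^ 2 * ‖q‖ ^ 2 ≤ ⟪r, q⟫ ^ 2 :=
      mul_le_of_le_one_right (sq_nonneg _) (pow_le_one₀ (norm_nonneg q) hq)
    have hr' : ‖r‖ ^ 2 / c ≤ ⟪r, q⟫ ^ 2 := by rwa [div_le_iff₀' hc]
    rw [norm_sub_sq_real, inner_smul_right, norm_smul, mul_pow, Real.norm_eq_abs, sq_abs,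
      sub_mul, one_mul, one_div_mul_eq_div]
    nlinarith
  calc ‖r - ⟪r, q⟫ • q‖ = √(‖r - ⟪r, q⟫ • q‖ ^ 2) := (Real.sqrt_sq (norm_nonneg _)).symm
    _ ≤ √((1 - 1 / c) * ‖r‖ ^ 2) := Real.sqrt_le_sqrt hsq
    _ = √(1 - 1 / c) * ‖r‖ := by rw [Real.sqrt_mul' _ (sq_nonneg _), Real.sqrt_sq (norm_nonneg _)]

lemma sum_sum_ite_val_eq {n1 n2 : ℕ} (x : ℝ) :
    ∑ q : Fin n1, ∑ p : Fin n2, (if (q : ℕ) = p then x else 0) = (min n1 n2 : ℝ) * x := by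
  have hrow (q : Fin n1) : ∑ p : Fin n2, (if (q : ℕ) = p then x else 0)
      = if (q : ℕ) < n2 then x else 0 := by
    split_ifs with hq
    · have hiff (p : Fin n2) : (q : ℕ) = p ↔ ⟨q, hq⟩ = p := by rw [Fin.ext_iff]
      simp only [hiff, Finset.sum_ite_eq, Finset.mem_univ, if_true]
    · exact Finset.sum_eq_zero fun p _ => if_neg fun h : (q : ℕ) = p => hq (h ▸ p.2)
  simp only [hrow, ← Finset.sum_filter, Finset.sum_const, Fin.card_filter_val_lt, nsmul_eq_mul,
    Nat.cast_min]

namespace Matrix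

variable {m n : Type*} [Fintype m] [Fintype n]

lemma trace_mul_conjTranspose_eq_sum (X Y : Matrix m n ℂ) :
    (X * Yᴴ).trace = ∑ i, ∑ j, X i j * conj (Y i j) := by
  simp [trace, mul_apply, conjTranspose_apply]

lemma trace_mul_conjTranspose_self_eq_sum_normSq (X : Matrix m n ℂ) :
    (X * Xᴴ).trace = ((∑ i, ∑ j, Complex.normSq (X i j) : ℝ) : ℂ) := by
  simp only [trace_mul_conjTranspose_eq_sum, Complex.mul_conj, Complex.ofReal_sum]

lemma trace_mul_conjTranspose_of_unitary {α : Type*} [CommRing α] [StarRing α]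
    [DecidableEq m] [DecidableEq n] {U : Matrix m m α} {V : Matrix n n α}
    (hU : Uᴴ * U = 1) (hV : Vᴴ * V = 1) (A B : Matrix m n α) :
    (U * A * Vᴴ * (U * B * Vᴴ)ᴴ).trace = (A * Bᴴ).trace := by
  have hsandwich : U * A * Vᴴ * (U * B * Vᴴ)ᴴ = U * (A * Bᴴ) * Uᴴ := by
    simp only [conjTranspose_mul, conjTranspose_conjTranspose, Matrix.mul_assoc]
    rw [← Matrix.mul_assoc Vᴴ V, hV, Matrix.one_mul]
  rw [hsandwich, trace_mul_cycle, hU, Matrix.one_mul]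

end Matrix

namespace T3

open Matrix

section Frobenius

variable {n1 n2 n3 : ℕ}

def toEuclidean : T3 n1 n2 n3 ℝ →ₗ[ℝ] EuclideanSpace ℝ (Fin n1 × Fin n2 × Fin n3) where
  toFun A := WithLp.toLp 2 fun x => A x.1 x.2.1 x.2.2
  map_add' _ _ := rfl
  map_smul' _ _ := rfl

lemma toEuclidean_injective : Function.Injective (toEuclidean : T3 n1 n2 n3 ℝ → _) := by
  intro A B h
  funext i j k
  exact congrArg (· (i, j, k)) h

lemma tInner_eq_inner (A B : T3 n1 n2 n3 ℝ) :
    tInner A B = inner ℝ (toEuclidean A) (toEuclidean B) := by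
  simp only [tInner, PiLp.inner_apply, Fintype.sum_prod_type, RCLike.inner_apply, conj_trivial,
    mul_comm]
  rfl

lemma tNorm_eq_norm (A : T3 n1 n2 n3 ℝ) : tNorm A = ‖toEuclidean A‖ := by
  rw [tNorm, tInner_eq_inner, norm_eq_sqrt_real_inner]

lemma tNorm_sq (A : T3 n1 n2 n3 ℝ) : tNorm A ^ 2 = tInner A A := by
  rw [tNorm_eq_norm, tInner_eq_inner, real_inner_self_eq_norm_sq]

lemma tNorm_zero : tNorm (0 : T3 n1 n2 n3 ℝ) = 0 := by
  rw [tNorm_eq_norm, map_zero, norm_zero]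

lemma neZero_of_ne_zero {A : T3 n1 n2 n3 ℝ} (hA : A ≠ 0) : NeZero n3 :=
  ⟨by rintro rfl; exact hA (funext fun _ => funext fun _ => funext fun k => k.elim0)⟩

lemma tNorm_le_of_idempotent_of_symm {P : T3 n1 n2 n3 ℝ → T3 n1 n2 n3 ℝ}
    (hidem : ∀ X, P (P X) = P X) (hsym : ∀ X Y, tInner (P X) Y = tInner X (P Y))
    (X : T3 n1 n2 n3 ℝ) : tNorm (P X) ≤ tNorm X := by
  have hcs : tNorm (P X) ^ 2 ≤ tNorm X * tNorm (P X) := by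
    rw [tNorm_sq, hsym, hidem, tInner_eq_inner, tNorm_eq_norm, tNorm_eq_norm]
    exact real_inner_le_norm _ _
  rw [tNorm_eq_norm, tNorm_eq_norm] at hcs ⊢
  nlinarith [norm_nonneg (toEuclidean X), norm_nonneg (toEuclidean (P X))]

end Frobenius

section DFT

lemma exists_isPrimitiveRoot_dftMatrix_eq_pow (n : ℕ) [NeZero n] :
    ∃ ω : ℂ, IsPrimitiveRoot ω n ∧
      ∀ a b : Fin n, dftMatrix n a b = ω ^ ((a : ℕ) * b) := by
  refine ⟨_, ?_, fun _ _ => rfl⟩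
  rw [neg_div, Complex.exp_neg]
  exact (Complex.isPrimitiveRoot_exp n (NeZero.ne n)).inv

variable {n : ℕ} [NeZero n]

lemma dftMatrix_add_right (k r q : Fin n) :
    dftMatrix n k (r + q) = dftMatrix n k r * dftMatrix n k q := by
  obtain ⟨ω, hω, hF⟩ := exists_isPrimitiveRoot_dftMatrix_eq_pow n
  have hωk : (ω ^ (k : ℕ)) ^ n = 1 := by
    rw [← pow_mul, mul_comm, pow_mul, hω.pow_eq_one, one_pow]
  simp only [hF, pow_mul, Fin.val_add, ← pow_eq_pow_mod _ hωk, pow_add]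

lemma dftMatrix_zero_right (k : Fin n) : dftMatrix n k 0 = 1 := by
  simp [dftMatrix]

lemma conj_dftMatrix (k m : Fin n) : conj (dftMatrix n k m) = dftMatrix n k (-m) := by
  obtain ⟨ω, hω, hF⟩ := exists_isPrimitiveRoot_dftMatrix_eq_pow n
  have hnorm : ‖dftMatrix n k m‖ = 1 := by
    rw [hF, norm_pow, hω.norm'_eq_one (NeZero.ne n), one_pow]
  have hprod : dftMatrix n k (-m) * dftMatrix n k m = 1 := by
    rw [← dftMatrix_add_right, neg_add_cancel, dftMatrix_zero_right]
  rw [eq_inv_of_mul_eq_one_left hprod, Complex.inv_def, ← Complex.sq_norm, hnorm]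
  simp

lemma sum_dftMatrix (m : Fin n) : ∑ k, dftMatrix n k m = if m = 0 then (n : ℂ) else 0 := by
  obtain ⟨ω, hω, hF⟩ := exists_isPrimitiveRoot_dftMatrix_eq_pow n
  simp only [hF, fun k : Fin n => pow_mul' ω (k : ℕ) m]
  rw [Fin.sum_univ_eq_sum_range (fun k => (ω ^ (m : ℕ)) ^ k)]
  split_ifs with hm
  · simp [hm]
  · have hm' : (m : ℕ) ≠ 0 := fun h => hm (Fin.ext h)
    rw [geom_sum_eq (hω.pow_ne_one_of_pos_of_lt hm' m.2), ← pow_mul, mul_comm, pow_mul,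
      hω.pow_eq_one, one_pow, sub_self, zero_div]

lemma sum_dftMatrix_mul_conj (m m' : Fin n) :
    ∑ k, dftMatrix n k m * conj (dftMatrix n k m') = if m = m' then (n : ℂ) else 0 := by
  simp only [conj_dftMatrix, ← dftMatrix_add_right, ← sub_eq_add_neg, sum_dftMatrix,
    sub_eq_zero]

lemma sum_dft_mul_conj_dft (a b : Fin n → ℂ) :
    ∑ k, (∑ m, dftMatrix n k m * a m) * conj (∑ m, dftMatrix n k m * b m)
      = n * ∑ m, a m * conj (b m) := by
  simp only [map_sum, map_mul, Finset.sum_mul_sum]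
  rw [Finset.sum_comm]
  simp only [Finset.mul_sum]
  refine Finset.sum_congr rfl fun m _ => ?_
  rw [Finset.sum_comm]
  calc _ = ∑ m', (∑ k, dftMatrix n k m * conj (dftMatrix n k m')) * (a m * conj (b m')) := by
        simp only [Finset.sum_mul]
        exact Finset.sum_congr rfl fun _ _ => Finset.sum_congr rfl fun _ _ => by ring
    _ = n * (a m * conj (b m)) := by simp [sum_dftMatrix_mul_conj]

end DFT

section Fourier

variable {n1 n2 n3 l : ℕ}

lemma hatSlice_lat (W : T3 n1 n2 n3 ℝ) (i : Fin n2) (k : Fin n3) :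
    hatSlice (lat W i) k = hatSlice W k * single i (0 : Fin 1) (1 : ℂ) := by
  ext p j
  rw [Subsingleton.elim j 0, mul_single_apply_same, mul_one]
  rfl

lemma hatSlice_apply_eq_zero_of_fDiag {S : T3 n1 n2 n3 ℝ} (hS : FDiag S) (k : Fin n3)
    {i : Fin n1} {j : Fin n2} (hij : (i : ℕ) ≠ j) : hatSlice S k i j = 0 := by
  simp [hatSlice, hS i j _ hij]

lemma TOrth.partOrth {Q : T3 n1 n1 n3 ℝ} (h : TOrth Q) : PartOrth Q := h.1

variable [NeZero n3]

lemma hatSlice_tprod (A : T3 n1 n2 n3 ℝ) (B : T3 n2 l n3 ℝ) (k : Fin n3) :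
    hatSlice (tprod A B) k = hatSlice A k * hatSlice B k := by
  ext i j
  simp only [hatSlice, tprod, mul_apply, Complex.ofReal_sum, Complex.ofReal_mul, Finset.mul_sum,
    Finset.sum_mul]
  rw [Finset.sum_comm]
  conv_rhs => rw [Finset.sum_comm]
  refine Finset.sum_congr rfl fun q _ => ?_
  rw [Finset.sum_comm]
  refine Finset.sum_congr rfl fun p _ => ?_
  -- substituting `m = r + q` splits the DFT kernel as `F k (r + q) = F k r * F k q`
  rw [← Equiv.sum_comp (Equiv.addRight q)]
  simp only [Equiv.coe_addRight, add_sub_cancel_right, dftMatrix_add_right]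
  exact Finset.sum_congr rfl fun r _ => by ring

lemma hatSlice_tT (A : T3 n1 n2 n3 ℝ) (k : Fin n3) : hatSlice (tT A) k = (hatSlice A k)ᴴ := by
  ext j i
  simp only [hatSlice, tT, conjTranspose_apply, star_sum, star_mul', Complex.star_def,
    Complex.conj_ofReal, conj_dftMatrix, mul_comm]
  exact (Equiv.sum_comp (Equiv.neg (Fin n3)) _).symm.trans (by simp)

lemma hatSlice_tI (k : Fin n3) : hatSlice (tI n1 n3) k = 1 := by
  ext i j
  simp only [hatSlice, tI, one_apply, Fin.val_eq_zero_iff, ite_and]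
  split_ifs <;> simp only [apply_ite, Complex.ofReal_one, Complex.ofReal_zero, mul_one,
    mul_zero, Finset.sum_ite_eq', Finset.mem_univ, if_true, dftMatrix_zero_right,
    Finset.sum_const_zero]

lemma sum_trace_hatSlice_mul_conjTranspose (A B : T3 n1 n2 n3 ℝ) :
    ∑ k, (hatSlice A k * (hatSlice B k)ᴴ).trace = n3 * tInner A B := by
  simp only [trace_mul_conjTranspose_eq_sum, hatSlice, tInner]
  rw [Finset.sum_comm]
  push_cast
  simp only [Finset.mul_sum]
  refine Finset.sum_congr rfl fun i _ => ?_
  rw [Finset.sum_comm]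
  refine Finset.sum_congr rfl fun j _ => ?_
  rw [sum_dft_mul_conj_dft]
  simp [Finset.mul_sum]

lemma natCast_mul_tInner_of_trace_eq {A B : T3 n1 n2 n3 ℝ} {f : Fin n3 → ℝ}
    (hf : ∀ k, (hatSlice A k * (hatSlice B k)ᴴ).trace = f k) :
    (n3 : ℝ) * tInner A B = ∑ k, f k := by
  have h := sum_trace_hatSlice_mul_conjTranspose A B
  simp only [hf, ← Complex.ofReal_sum] at h
  exact_mod_cast h.symm

lemma natCast_mul_tInner_self (A : T3 n1 n2 n3 ℝ) :
    (n3 : ℝ) * tInner A A = ∑ k, ∑ i, ∑ j, Complex.normSq (hatSlice A k i j) :=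
  natCast_mul_tInner_of_trace_eq fun _ => trace_mul_conjTranspose_self_eq_sum_normSq _

lemma natCast_mul_sq_tNorm_tube (S : T3 n1 n2 n3 ℝ) (i : Fin n1) (j : Fin n2) :
    (n3 : ℝ) * tNorm (tube S i j) ^ 2 = ∑ k, Complex.normSq (hatSlice S k i j) := by
  rw [tNorm_sq, natCast_mul_tInner_self]
  simp only [Finset.univ_unique, Finset.sum_singleton]
  rfl

lemma PartOrth.conjTranspose_hatSlice_mul_self {Q : T3 n1 n2 n3 ℝ} (h : PartOrth Q)
    (k : Fin n3) : (hatSlice Q k)ᴴ * hatSlice Q k = 1 := by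
  simpa only [hatSlice_tprod, hatSlice_tT, hatSlice_tI] using congrArg (hatSlice · k) h

end Fourier

section LeadingTerm

variable {n1 n2 n3 : ℕ} {R : T3 n1 n2 n3 ℝ} {U : T3 n1 n1 n3 ℝ} {S : T3 n1 n2 n3 ℝ}
  {V : T3 n2 n2 n3 ℝ}

lemma OrderedDiag.normSq_hatSlice_le (hS : OrderedDiag S) (k : Fin n3)
    {i i' : Fin n1} {j j' : Fin n2} (hij : (i : ℕ) = j) (hij' : (i' : ℕ) = j')
    (hle : (i : ℕ) ≤ i') :
    Complex.normSq (hatSlice S k i' j') ≤ Complex.normSq (hatSlice S k i j) := by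
  obtain ⟨him, hre⟩ := (hS k).1 i j hij
  obtain ⟨him', hre'⟩ := (hS k).1 i' j' hij'
  have hmono := (hS k).2 i i' j j' hij hij' hle
  rw [Complex.normSq_apply, Complex.normSq_apply, him, him']
  nlinarith

lemma sum_normSq_hatSlice_le (hF : FDiag S) (hS : OrderedDiag S) (hn1 : 0 < n1) (hn2 : 0 < n2)
    (k : Fin n3) :
    ∑ i, ∑ j, Complex.normSq (hatSlice S k i j)
      ≤ (min n1 n2 : ℝ) * Complex.normSq (hatSlice S k ⟨0, hn1⟩ ⟨0, hn2⟩) := by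
  rw [← sum_sum_ite_val_eq]
  refine Finset.sum_le_sum fun i _ => Finset.sum_le_sum fun j _ => ?_
  split_ifs with hij
  · exact hS.normSq_hatSlice_le k rfl hij (Nat.zero_le _)
  · simp [hatSlice_apply_eq_zero_of_fDiag hF k hij]

variable [NeZero n3]

lemma IsTSVD.hatSlice_eq (h : IsTSVD R U S V) (k : Fin n3) :
    hatSlice R k = hatSlice U k * hatSlice S k * (hatSlice V k)ᴴ := by
  rw [h.2.2.2, hatSlice_tprod, hatSlice_tprod, hatSlice_tT]

lemma IsTSVD.sum_normSq_hatSlice (h : IsTSVD R U S V) (k : Fin n3) :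
    ∑ i, ∑ j, Complex.normSq (hatSlice R k i j)
      = ∑ i, ∑ j, Complex.normSq (hatSlice S k i j) := by
  have htr := trace_mul_conjTranspose_of_unitary
    (h.1.partOrth.conjTranspose_hatSlice_mul_self k)
    (h.2.1.partOrth.conjTranspose_hatSlice_mul_self k) (hatSlice S k) (hatSlice S k)
  rw [← h.hatSlice_eq, trace_mul_conjTranspose_self_eq_sum_normSq,
    trace_mul_conjTranspose_self_eq_sum_normSq] at htr
  exact_mod_cast htr

lemma IsOrderedTSVD.tInner_self_le (h : IsOrderedTSVD R U S V) (hn1 : 0 < n1) (hn2 : 0 < n2) :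
    tInner R R ≤ (min n1 n2 : ℝ) * tNorm (tube S ⟨0, hn1⟩ ⟨0, hn2⟩) ^ 2 := by
  have hn3 : (0 : ℝ) < n3 := by exact_mod_cast Nat.pos_of_neZero n3
  refine le_of_mul_le_mul_left ?_ hn3
  calc (n3 : ℝ) * tInner R R = ∑ k, ∑ i, ∑ j, Complex.normSq (hatSlice S k i j) := by
        rw [natCast_mul_tInner_self]
        exact Finset.sum_congr rfl fun k _ => h.1.sum_normSq_hatSlice k
    _ ≤ ∑ k, (min n1 n2 : ℝ) * Complex.normSq (hatSlice S k ⟨0, hn1⟩ ⟨0, hn2⟩) :=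
        Finset.sum_le_sum fun k _ => sum_normSq_hatSlice_le h.1.2.2.1 h.2 hn1 hn2 k
    _ = n3 * ((min n1 n2 : ℝ) * tNorm (tube S ⟨0, hn1⟩ ⟨0, hn2⟩) ^ 2) := by
        rw [← Finset.mul_sum, ← natCast_mul_sq_tNorm_tube]
        ring

lemma hatSlice_leadM (hn1 : 0 < n1) (hn2 : 0 < n2) (U : T3 n1 n1 n3 ℝ) (S : T3 n1 n2 n3 ℝ)
    (V : T3 n2 n2 n3 ℝ) (k : Fin n3) :
    hatSlice (leadM hn1 hn2 U S V) k
      = hatSlice U k * single (⟨0, hn1⟩ : Fin n1) (⟨0, hn2⟩ : Fin n2)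
          (hatSlice S k ⟨0, hn1⟩ ⟨0, hn2⟩ / tNorm (tube S ⟨0, hn1⟩ ⟨0, hn2⟩))
        * (hatSlice V k)ᴴ := by
  rw [leadM, hatSlice_tprod, hatSlice_tprod, hatSlice_tT, hatSlice_lat, hatSlice_lat,
    conjTranspose_mul, conjTranspose_single, star_one]
  have hmid (X : Matrix (Fin 1) (Fin 1) ℂ) :
      (single ⟨0, hn1⟩ 0 1 : Matrix (Fin n1) (Fin 1) ℂ) * X
        * (single 0 ⟨0, hn2⟩ 1 : Matrix (Fin 1) (Fin n2) ℂ)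
        = single ⟨0, hn1⟩ ⟨0, hn2⟩ (X 0 0) := by
    rw [single_mul_mul_single, one_mul, mul_one]
  set X := hatSlice
    (fun _ _ m => S ⟨0, hn1⟩ ⟨0, hn2⟩ m / tNorm (tube S ⟨0, hn1⟩ ⟨0, hn2⟩)) k
    with hX
  calc _ = hatSlice U k
        * ((single ⟨0, hn1⟩ 0 1 : Matrix (Fin n1) (Fin 1) ℂ) * X
          * (single 0 ⟨0, hn2⟩ 1 : Matrix (Fin 1) (Fin n2) ℂ)) * (hatSlice V k)ᴴ := by
        simp only [Matrix.mul_assoc]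
    _ = _ := by
        rw [hmid, hX]
        congr 3
        simp [hatSlice, Finset.sum_div, mul_div_assoc]

lemma trace_mul_conjTranspose_hatSlice_leadM (hU : PartOrth U) (hV : PartOrth V)
    (hn1 : 0 < n1) (hn2 : 0 < n2) (S : T3 n1 n2 n3 ℝ) (k : Fin n3)
    (A : Matrix (Fin n1) (Fin n2) ℂ) :
    ((hatSlice U k * A * (hatSlice V k)ᴴ) * (hatSlice (leadM hn1 hn2 U S V) k)ᴴ).trace
      = A ⟨0, hn1⟩ ⟨0, hn2⟩ * conj (hatSlice S k ⟨0, hn1⟩ ⟨0, hn2⟩)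
        / tNorm (tube S ⟨0, hn1⟩ ⟨0, hn2⟩) := by
  rw [hatSlice_leadM, trace_mul_conjTranspose_of_unitary (hU.conjTranspose_hatSlice_mul_self k)
    (hV.conjTranspose_hatSlice_mul_self k), conjTranspose_single, trace_mul_single]
  simp [div_eq_mul_inv, mul_assoc]

lemma IsTSVD.tInner_leadM (h : IsTSVD R U S V) (hn1 : 0 < n1) (hn2 : 0 < n2)
    (hν : tNorm (tube S ⟨0, hn1⟩ ⟨0, hn2⟩) ≠ 0) :
    tInner R (leadM hn1 hn2 U S V) = tNorm (tube S ⟨0, hn1⟩ ⟨0, hn2⟩) := by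
  have hk (k : Fin n3) : (hatSlice R k * (hatSlice (leadM hn1 hn2 U S V) k)ᴴ).trace
      = ((Complex.normSq (hatSlice S k ⟨0, hn1⟩ ⟨0, hn2⟩)
          / tNorm (tube S ⟨0, hn1⟩ ⟨0, hn2⟩) : ℝ) : ℂ) := by
    rw [h.hatSlice_eq, trace_mul_conjTranspose_hatSlice_leadM h.1.partOrth h.2.1.partOrth,
      Complex.mul_conj]
    push_cast
    rfl
  apply mul_left_cancel₀ (Nat.cast_ne_zero.2 (NeZero.ne n3) : (n3 : ℝ) ≠ 0)
  rw [natCast_mul_tInner_of_trace_eq hk, ← Finset.sum_div, ← natCast_mul_sq_tNorm_tube]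
  field_simp

lemma tInner_leadM_self (hU : PartOrth U) (hV : PartOrth V) (hn1 : 0 < n1) (hn2 : 0 < n2)
    (S : T3 n1 n2 n3 ℝ) (hν : tNorm (tube S ⟨0, hn1⟩ ⟨0, hn2⟩) ≠ 0) :
    tInner (leadM hn1 hn2 U S V) (leadM hn1 hn2 U S V) = 1 := by
  have hk (k : Fin n3) :
      (hatSlice (leadM hn1 hn2 U S V) k * (hatSlice (leadM hn1 hn2 U S V) k)ᴴ).trace
        = ((Complex.normSq (hatSlice S k ⟨0, hn1⟩ ⟨0, hn2⟩)
            / tNorm (tube S ⟨0, hn1⟩ ⟨0, hn2⟩) ^ 2 : ℝ) : ℂ) := by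
    nth_rewrite 1 [hatSlice_leadM]
    rw [trace_mul_conjTranspose_hatSlice_leadM hU hV, single_apply_same]
    push_cast
    rw [← Complex.mul_conj]
    ring
  apply mul_left_cancel₀ (Nat.cast_ne_zero.2 (NeZero.ne n3) : (n3 : ℝ) ≠ 0)
  rw [natCast_mul_tInner_of_trace_eq hk, ← Finset.sum_div, ← natCast_mul_sq_tNorm_tube]
  field_simp

end LeadingTerm

lemma tNorm_sub_smul_proj_leadM_le {n1 n2 n3 : ℕ} (hn1 : 0 < n1) (hn2 : 0 < n2)
    {P : T3 n1 n2 n3 ℝ → T3 n1 n2 n3 ℝ} (hidem : ∀ X, P (P X) = P X)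
    (hsym : ∀ X Y, tInner (P X) Y = tInner X (P Y)) {R : T3 n1 n2 n3 ℝ} (hfix : P R = R)
    {U : T3 n1 n1 n3 ℝ} {S : T3 n1 n2 n3 ℝ} {V : T3 n2 n2 n3 ℝ} (h : IsOrderedTSVD R U S V)
    (hR : R ≠ 0) :
    tNorm (R - tNorm (tube S ⟨0, hn1⟩ ⟨0, hn2⟩) • P (leadM hn1 hn2 U S V))
      ≤ √(1 - 1 / (min n1 n2 : ℝ)) * tNorm R := by
  have := neZero_of_ne_zero hR
  have hbound := h.tInner_self_le hn1 hn2
  set ν := tNorm (tube S ⟨0, hn1⟩ ⟨0, hn2⟩)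
  set M := leadM hn1 hn2 U S V
  have hν : ν ≠ 0 := by
    rintro hν
    rw [hν, zero_pow two_ne_zero, mul_zero, ← tNorm_sq, tNorm_eq_norm, _root_.sq_nonpos_iff,
      norm_eq_zero, ← map_zero toEuclidean] at hbound
    exact hR (toEuclidean_injective hbound)
  have hinner : tInner R (P M) = ν := by
    rw [← hsym, hfix, h.1.tInner_leadM hn1 hn2 hν]
  have hPM : tNorm (P M) ≤ 1 := by
    calc tNorm (P M) ≤ tNorm M := tNorm_le_of_idempotent_of_symm hidem hsym M
      _ = 1 := by rw [tNorm, tInner_leadM_self h.1.1.partOrth h.1.2.1.partOrth hn1 hn2 S hν,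
        Real.sqrt_one]
  have hmin : 0 < min (n1 : ℝ) n2 := by positivity
  rw [tInner_eq_inner] at hinner
  rw [tNorm_eq_norm] at hPM
  rw [← tNorm_sq, tNorm_eq_norm, ← hinner] at hbound
  rw [tNorm_eq_norm, tNorm_eq_norm, map_sub, map_smul, ← hinner]
  exact norm_sub_inner_smul_le hmin hPM hbound

end T3

theorem stmt_17_general (n1 n2 n3 : ℕ) (hn1 : 0 < n1) (hn2 : 0 < n2)
    (P : T3 n1 n2 n3 ℝ → T3 n1 n2 n3 ℝ)
    (hidem : ∀ X, P (P X) = P X)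
    (hsym : ∀ X Y, tInner (P X) Y = tInner X (P Y))
    (Y : T3 n1 n2 n3 ℝ) (R : ℕ → T3 n1 n2 n3 ℝ)
    (hR1 : R 1 = P Y)
    (hfix : ∀ k, 1 ≤ k → P (R k) = R k)
    (hstep : ∀ k, 1 ≤ k →
      (R k = 0 ∧ R (k + 1) = 0) ∨
      (R k ≠ 0 ∧ ∃ (U : T3 n1 n1 n3 ℝ) (S : T3 n1 n2 n3 ℝ) (V : T3 n2 n2 n3 ℝ),
        IsOrderedTSVD (R k) U S V ∧
        tNorm (R (k + 1)) ≤ ⨅ θ : ℝ, tNorm (R k - θ • P (leadM hn1 hn2 U S V)))) :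
    ∀ k, 1 ≤ k →
      tNorm (R k) ≤ Real.sqrt (1 - 1 / (min n1 n2 : ℝ)) ^ (k - 1) * tNorm (P Y) := by
  have hcontract : ∀ k, 1 ≤ k →
      tNorm (R (k + 1)) ≤ Real.sqrt (1 - 1 / (min n1 n2 : ℝ)) * tNorm (R k) := by
    intro k hk
    rcases hstep k hk with ⟨_, hzero⟩ | ⟨hR, U, S, V, h, hle⟩
    · rw [hzero, tNorm_zero]
      exact mul_nonneg (Real.sqrt_nonneg _) (Real.sqrt_nonneg _)
    · have hbdd :
          BddBelow (Set.range fun θ : ℝ => tNorm (R k - θ • P (leadM hn1 hn2 U S V))) :=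
        ⟨0, by rintro _ ⟨θ, rfl⟩; exact Real.sqrt_nonneg _⟩
      exact hle.trans ((ciInf_le hbdd _).trans
        (tNorm_sub_smul_proj_leadM_le hn1 hn2 hidem hsym (hfix k hk) h hR))
  intro k hk
  obtain ⟨j, rfl⟩ := Nat.exists_eq_add_of_le' hk
  simpa [hR1] using le_geom (u := fun i => tNorm (R (i + 1))) (Real.sqrt_nonneg _) j
    fun i _ => hcontract (i + 1) (Nat.le_add_left 1 i)

/-- Theorem 3.1, linear convergence: the residuals of the greedy scheme
satisfy `‖R_k‖_F ≤ (√(1 − 1/min(n1,n2)))^{k−1}·‖P(Y)‖_F` for all `k ≥ 1`. -/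
theorem stmt_17 (n1 n2 n3 : ℕ) (hn1 : 0 < n1) (hn2 : 0 < n2)
    (P : T3 n1 n2 n3 ℝ → T3 n1 n2 n3 ℝ) (hlin : IsLinearMap ℝ P)
    (hidem : ∀ X, P (P X) = P X)
    (hsym : ∀ X Y, tInner (P X) Y = tInner X (P Y))
    (Y : T3 n1 n2 n3 ℝ) (R : ℕ → T3 n1 n2 n3 ℝ)
    (hR1 : R 1 = P Y)
    (hfix : ∀ k, 1 ≤ k → P (R k) = R k)
    (hstep : ∀ k, 1 ≤ k →
      (R k = 0 ∧ R (k + 1) = 0) ∨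
      (R k ≠ 0 ∧ ∃ (U : T3 n1 n1 n3 ℝ) (S : T3 n1 n2 n3 ℝ) (V : T3 n2 n2 n3 ℝ),
        IsOrderedTSVD (R k) U S V ∧
        tNorm (R (k + 1)) ≤ ⨅ θ : ℝ, tNorm (R k - θ • P (leadM hn1 hn2 U S V)))) :
    ∀ k, 1 ≤ k →
      tNorm (R k) ≤ Real.sqrt (1 - 1 / (min n1 n2 : ℝ)) ^ (k - 1) * tNorm (P Y) :=
  stmt_17_general n1 n2 n3 hn1 hn2 P hidem hsym Y R hR1 hfix hstep
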